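/- arXiv:1208.1972 — 11 statements merged into one kernel-verified Lean document; each statement's English description precedes it below -/
import Mathlib

section
/- Let L be a Lie algebra and I an inner ideal of L. Then I^[3] := ⁅I, ⁅I, I⁆⁆ is also an inner ideal of L. -/
/-- If `I` is an inner ideal of a Lie algebra `L`, then `I^[3] = ⁅I, ⁅I, I⁆⁆`
(the span of the elements `⁅a, ⁅b, c⁆⁆` with `a, b, c ∈ I`) is also an inner ideal of `L`. -/
theorem cube_inner_ideal {F L : Type*} [Field F] [LieRing L] [LieAlgebra F L]
    (I : Submodule F L)
    (hI : ∀ a ∈ I, ∀ b ∈ I, ∀ x : L, ⁅a, ⁅b, x⁆⁆ ∈ I) :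
    ∀ a ∈ Submodule.span F {x : L | ∃ p ∈ I, ∃ q ∈ I, ∃ r ∈ I, ⁅p, ⁅q, r⁆⁆ = x},
      ∀ b ∈ Submodule.span F {x : L | ∃ p ∈ I, ∃ q ∈ I, ∃ r ∈ I, ⁅p, ⁅q, r⁆⁆ = x},
        ∀ x : L,
          ⁅a, ⁅b, x⁆⁆ ∈ Submodule.span F {x : L | ∃ p ∈ I, ∃ q ∈ I, ∃ r ∈ I, ⁅p, ⁅q, r⁆⁆ = x} := by
  set S : Set L := {x : L | ∃ p ∈ I, ∃ q ∈ I, ∃ r ∈ I, ⁅p, ⁅q, r⁆⁆ = x} with hS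
  intro a ha b hb x
  have hJI : Submodule.span F S ≤ I := by
    rw [Submodule.span_le]
    rintro _ ⟨p, hp, q, hq, r, hr, rfl⟩
    exact hI p hp q hq r
  have hbI : b ∈ I := hJI hb
  induction ha using Submodule.span_induction with
  | mem a hmem =>
    obtain ⟨p, hp, q, hq, r, hr, rfl⟩ := hmem
    set y : L := ⁅b, x⁆ with hy
    have key : ⁅⁅p, ⁅q, r⁆⁆, y⁆ =
        ⁅p, ⁅q, ⁅r, y⁆⁆⁆ - ⁅p, ⁅r, ⁅q, y⁆⁆⁆ - (⁅q, ⁅r, ⁅p, y⁆⁆⁆ - ⁅r, ⁅q, ⁅p, y⁆⁆⁆) := by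
      simp only [lie_lie, lie_sub, sub_lie]
    rw [key]
    have h1 : ⁅p, ⁅q, ⁅r, y⁆⁆⁆ ∈ Submodule.span F S :=
      Submodule.subset_span ⟨p, hp, q, hq, ⁅r, y⁆, hI r hr b hbI x, rfl⟩
    have h2 : ⁅p, ⁅r, ⁅q, y⁆⁆⁆ ∈ Submodule.span F S :=
      Submodule.subset_span ⟨p, hp, r, hr, ⁅q, y⁆, hI q hq b hbI x, rfl⟩
    have h3 : ⁅q, ⁅r, ⁅p, y⁆⁆⁆ ∈ Submodule.span F S :=
      Submodule.subset_span ⟨q, hq, r, hr, ⁅p, y⁆, hI p hp b hbI x, rfl⟩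
    have h4 : ⁅r, ⁅q, ⁅p, y⁆⁆⁆ ∈ Submodule.span F S :=
      Submodule.subset_span ⟨r, hr, q, hq, ⁅p, y⁆, hI p hp b hbI x, rfl⟩
    exact Submodule.sub_mem _ (Submodule.sub_mem _ h1 h2) (Submodule.sub_mem _ h3 h4)
  | zero => simp
  | add u v _ _ hu hv => rw [add_lie]; exact Submodule.add_mem _ hu hv
  | smul c u _ hu => rw [smul_lie]; exact Submodule.smul_mem _ c hu
end

section
/- Let L be a Lie algebra and I an inner ideal of L such that ⁅I, ⁅I, I⁆⁆ = I. Then I is a Lie ideal of L. -/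
/-- If `I` is an inner ideal of a Lie algebra `L` with `⁅I, ⁅I, I⁆⁆ = I`,
then `I` is a Lie ideal of `L`, i.e. `⁅L, I⁆ ⊆ I`. -/
theorem inner_ideal_cube_eq_self_is_ideal {F L : Type*} [Field F] [LieRing L] [LieAlgebra F L]
    (I : Submodule F L)
    (hI : ∀ a ∈ I, ∀ b ∈ I, ∀ x : L, ⁅a, ⁅b, x⁆⁆ ∈ I)
    (hEq : Submodule.span F {x : L | ∃ p ∈ I, ∃ q ∈ I, ∃ r ∈ I, ⁅p, ⁅q, r⁆⁆ = x} = I) :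
    ∀ x : L, ∀ i ∈ I, ⁅x, i⁆ ∈ I := by
  intro x i hi
  rw [← hEq] at hi
  induction hi using Submodule.span_induction with
  | mem w hw =>
    obtain ⟨p, hp, q, hq, r, hr, rfl⟩ := hw
    have key : ⁅x, ⁅p, ⁅q, r⁆⁆⁆ =
        (-⁅q, ⁅r, ⁅x, p⁆⁆⁆ + ⁅r, ⁅q, ⁅x, p⁆⁆⁆) +
        (-⁅p, ⁅r, ⁅x, q⁆⁆⁆ + ⁅p, ⁅q, ⁅x, r⁆⁆⁆) := by
      rw [leibniz_lie x p ⁅q, r⁆, leibniz_lie x q r, lie_add p,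
        ← lie_skew ⁅x, p⁆ ⁅q, r⁆, lie_lie, ← lie_skew ⁅x, q⁆ r, lie_neg]
      abel
    rw [key]
    exact I.add_mem (I.add_mem (I.neg_mem (hI q hq r hr _)) (hI r hr q hq _))
      (I.add_mem (I.neg_mem (hI p hp r hr _)) (hI p hp q hq _))
  | zero => simp only [lie_zero]; exact I.zero_mem
  | add a b _ _ ha hb => rw [lie_add]; exact I.add_mem ha hb
  | smul c a _ ha => rw [lie_smul]; exact I.smul_mem c ha
end

section
/- Let A be an associative algebra, L = [A,A] the linear span of commutators viewed as a Lie subalgebra of A with bracket [a,b] = ab - ba, and I a subspace of L with I·I = 0. Then I is an inner ideal of L if and only if ixj + jxi ∈ I for all i, j ∈ I and all x ∈ L. -/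
/-- Let `A` be an associative algebra, `L = [A,A]` the span of commutators (a Lie
subalgebra of `A` under `⁅a,b⁆ = a*b - b*a`) and `I ⊆ L` a subspace with `I·I = 0`.
Then `I` is an inner ideal of `L` iff `i*x*j + j*x*i ∈ I` for all `i, j ∈ I`, `x ∈ L`. -/
theorem inner_ideal_iff_sym {F A : Type*} [Field F] [Ring A] [Algebra F A]
    (L : Submodule F A) (hL : L = Submodule.span F {x : A | ∃ a b : A, a * b - b * a = x})
    (I : Submodule F A) (hIL : I ≤ L)
    (hI2 : ∀ i ∈ I, ∀ j ∈ I, i * j = 0) :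
    (∀ i ∈ I, ∀ j ∈ I, ∀ x ∈ L, i * (j * x - x * j) - (j * x - x * j) * i ∈ I) ↔
      (∀ i ∈ I, ∀ j ∈ I, ∀ x ∈ L, i * x * j + j * x * i ∈ I) := by
  have key : ∀ i ∈ I, ∀ j ∈ I, ∀ x : A,
      i * (j * x - x * j) - (j * x - x * j) * i = -(i * x * j + j * x * i) := by
    intro i hi j hj x
    have e1 := hI2 i hi j hj
    have e2 := hI2 j hj i hi
    have : i * (j * x - x * j) - (j * x - x * j) * i
        = (i * j) * x + x * (j * i) - (i * x * j + j * x * i) := by noncomm_ring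
    rw [this, e1, e2, zero_mul, mul_zero, add_zero, zero_sub]
  constructor
  · intro h i hi j hj x hx
    have := h i hi j hj x hx
    rw [key i hi j hj x] at this
    simpa using I.neg_mem this
  · intro h i hi j hj x hx
    rw [key i hi j hj x]
    exact I.neg_mem (h i hi j hj x hx)
end

section
/- Let A be an associative algebra, L = [A,A], and I a subspace of L with I·I = 0 and IAI ⊆ I. Then I is an inner ideal of the Lie algebra L. -/
/-- Let `A` be an associative algebra, `L = [A,A]` the span of commutators and `I ⊆ L`
a subspace with `I·I = 0` and `IAI ⊆ I`. Then `I` is an inner ideal of the Lie algebra `L`. -/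
theorem regular_is_inner_ideal {F A : Type*} [Field F] [Ring A] [Algebra F A]
    (L : Submodule F A) (hL : L = Submodule.span F {x : A | ∃ a b : A, a * b - b * a = x})
    (I : Submodule F A) (hIL : I ≤ L)
    (hI2 : ∀ i ∈ I, ∀ j ∈ I, i * j = 0)
    (hIAI : ∀ i ∈ I, ∀ j ∈ I, ∀ a : A, i * a * j ∈ I) :
    ∀ i ∈ I, ∀ j ∈ I, ∀ x ∈ L, i * (j * x - x * j) - (j * x - x * j) * i ∈ I := by
  intro i hi j hj x _
  have h1 : i * x * j ∈ I := hIAI i hi j hj x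
  have h2 : j * x * i ∈ I := hIAI j hj i hi x
  have e : i * (j * x - x * j) - (j * x - x * j) * i
      = i * j * x - i * x * j - j * x * i + x * (j * i) := by noncomm_ring
  rw [e, hI2 i hi j hj, hI2 j hj i hi, zero_mul, mul_zero, zero_sub, add_zero]
  exact I.sub_mem (I.neg_mem h1) h2
end

section
/- Let A be an associative algebra with involution *, K = [u,u] where u = {a ∈ A : a* = -a} is the Lie algebra of skew elements, and I a subspace of K with I·I = 0. Then for all i, j ∈ I and a ∈ A, the element iaj - (iaj)* lies in K. -/
/-- Let `A` be an associative algebra with involution `*`, `K = su*(A) = [u*(A), u*(A)]`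
where `u*(A) = {a : a* = -a}`, and `I ⊆ K` a subspace with `I·I = 0`. Then
`i*a*j - (i*a*j)* ∈ K` for all `i, j ∈ I` and `a ∈ A`. -/
theorem u_star_IAI_subset_K {F A : Type*} [Field F] [Ring A] [Algebra F A]
    [StarRing F] [TrivialStar F] [StarRing A] [StarModule F A]
    (K : Submodule F A)
    (hK : K = Submodule.span F
      {x : A | ∃ a b : A, star a = -a ∧ star b = -b ∧ a * b - b * a = x})
    (I : Submodule F A) (hIK : I ≤ K)
    (hI2 : ∀ i ∈ I, ∀ j ∈ I, i * j = 0) :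
    ∀ i ∈ I, ∀ j ∈ I, ∀ a : A, i * a * j - star (i * a * j) ∈ K := by
  -- every element of K is skew-adjoint
  have hskew : ∀ x ∈ K, star x = -x := by
    intro x hx
    rw [hK] at hx
    induction hx using Submodule.span_induction with
    | mem x hx =>
      obtain ⟨a, b, ha, hb, hab⟩ := hx
      subst hab
      simp [star_sub, star_mul, ha, hb]
    | zero => simp
    | add x y _ _ hx hy => simp [hx, hy]; abel
    | smul c x _ hx => simp [hx]
  intro i hi j hj a
  have hi' : star i = -i := hskew i (hIK hi)
  have hj' : star j = -j := hskew j (hIK hj)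
  have hij : i * j = 0 := hI2 i hi j hj
  have hji : j * i = 0 := hI2 j hj i hi
  set b : A := a * j + j * star a with hb
  have hbskew : star b = -b := by
    simp [hb, star_add, star_mul, hj']
  have hkey : i * a * j - star (i * a * j) = i * b - b * i := by
    have hstar : star (i * a * j) = j * star a * i := by
      simp [star_mul, hi', hj', mul_assoc]
    rw [hstar, hb]
    rw [mul_add, add_mul]
    rw [show i * (a * j) = i * a * j from (mul_assoc i a j).symm]
    rw [show i * (j * star a) = (i * j) * star a from (mul_assoc i j (star a)).symm]
    rw [show a * j * i = a * (j * i) from mul_assoc a j i]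
    rw [hij, hji]
    simp
  rw [hkey, hK]
  exact Submodule.subset_span ⟨i, b, hi', hbskew, rfl⟩
end

section
/- Let A be an associative algebra with involution *, K = su*(A) = [u*(A), u*(A)], and I a subspace of K with I·I = 0. If iaj - (iaj)* ∈ I for all i, j ∈ I and a ∈ A, then I is an inner ideal of the Lie algebra K. -/
/-- Let `A` be an associative algebra with involution `*`, `K = su*(A)`, and `I ⊆ K`
a subspace with `I·I = 0`. If `i*a*j - (i*a*j)* ∈ I` for all `i, j ∈ I`, `a ∈ A`,
then `I` is an inner ideal of the Lie algebra `K`. -/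
theorem star_regular_is_inner_ideal {F A : Type*} [Field F] [Ring A] [Algebra F A]
    [StarRing F] [TrivialStar F] [StarRing A] [StarModule F A]
    (K : Submodule F A)
    (hK : K = Submodule.span F
      {x : A | ∃ a b : A, star a = -a ∧ star b = -b ∧ a * b - b * a = x})
    (I : Submodule F A) (hIK : I ≤ K)
    (hI2 : ∀ i ∈ I, ∀ j ∈ I, i * j = 0)
    (hreg : ∀ i ∈ I, ∀ j ∈ I, ∀ a : A, i * a * j - star (i * a * j) ∈ I) :
    ∀ i ∈ I, ∀ j ∈ I, ∀ x ∈ K, i * (j * x - x * j) - (j * x - x * j) * i ∈ I := by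
  have hskew : ∀ x ∈ K, star x = -x := by
    intro x hx
    rw [hK] at hx
    induction hx using Submodule.span_induction with
    | mem y hy =>
        obtain ⟨a, b, ha, hb, rfl⟩ := hy
        simp only [star_sub, star_mul, ha, hb]
        noncomm_ring
    | zero => simp
    | add y z _ _ hy hz => rw [star_add, hy, hz]; abel
    | smul c y _ hy => rw [star_smul, hy, star_trivial, smul_neg]
  intro i hi j hj x hx
  have hsi : star i = -i := hskew i (hIK hi)
  have hsj : star j = -j := hskew j (hIK hj)
  have hsx : star x = -x := hskew x hx
  have h1 := hreg i hi j hj x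
  have hstar : star (i * x * j) = -(j * (x * i)) := by
    rw [star_mul, star_mul, hsi, hsj, hsx]; noncomm_ring
  rw [hstar] at h1
  have key : i * (j * x - x * j) - (j * x - x * j) * i =
      -(i * x * j - -(j * (x * i))) + (i * j) * x + x * (j * i) := by
    noncomm_ring
  rw [key, hI2 i hi j hj, hI2 j hj i hi, zero_mul, mul_zero, add_zero, add_zero]
  exact I.neg_mem h1
end

section
/- Let A be an associative ring. Then every x ∈ A with x² = 0 is von Neumann regular if and only if 𝓡𝓛 = 𝓡 ∩ 𝓛 for every left ideal 𝓛 and right ideal 𝓡 of A satisfying 𝓛𝓡 = 0. -/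
/-- In an associative ring `A`, every `x` with `x² = 0` is von Neumann regular iff
`𝓡𝓛 = 𝓡 ⊓ 𝓛` for every left ideal `𝓛` and right ideal `𝓡` with `𝓛𝓡 = 0`. -/
theorem square_zero_vonNeumann_iff {A : Type*} [NonUnitalRing A] :
    (∀ x : A, x * x = 0 → ∃ y : A, x * y * x = x) ↔
      ∀ (𝓛 𝓡 : AddSubgroup A), (∀ a : A, ∀ l ∈ 𝓛, a * l ∈ 𝓛) →
        (∀ a : A, ∀ r ∈ 𝓡, r * a ∈ 𝓡) →
        (∀ l ∈ 𝓛, ∀ r ∈ 𝓡, l * r = 0) →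
        AddSubgroup.closure {x : A | ∃ r ∈ 𝓡, ∃ l ∈ 𝓛, r * l = x} = 𝓡 ⊓ 𝓛 := by
  constructor
  · intro hreg 𝓛 𝓡 hL hR hLR
    apply le_antisymm
    · rw [AddSubgroup.closure_le]
      rintro z ⟨r, hr, l, hl, rfl⟩
      exact ⟨hR l r hr, hL r l hl⟩
    · rintro z ⟨hzR, hzL⟩
      have hz2 : z * z = 0 := hLR z hzL z hzR
      obtain ⟨y, hy⟩ := hreg z hz2
      apply AddSubgroup.subset_closure
      exact ⟨z, hzR, y * z, hL y z hzL, by rw [← mul_assoc]; exact hy⟩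
  · intro h x hx
    have h1 : ∀ c : A, x * (x * c) = 0 := fun c => by rw [← mul_assoc, hx, zero_mul]
    have h2 : ∀ c : A, c * x * x = 0 := fun c => by rw [mul_assoc, hx, mul_zero]
    -- left ideal generated by x
    let L : AddSubgroup A :=
      { carrier := {z | ∃ a : A, ∃ n : ℤ, a * x + n • x = z}
        zero_mem' := ⟨0, 0, by simp⟩
        add_mem' := by
          rintro _ _ ⟨a, n, rfl⟩ ⟨b, m, rfl⟩
          exact ⟨a + b, n + m, by rw [add_mul, add_zsmul]; abel⟩
        neg_mem' := by
          rintro _ ⟨a, n, rfl⟩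
          exact ⟨-a, -n, by rw [neg_mul, neg_zsmul]; abel⟩ }
    -- right ideal generated by x
    let R : AddSubgroup A :=
      { carrier := {z | ∃ a : A, ∃ n : ℤ, x * a + n • x = z}
        zero_mem' := ⟨0, 0, by simp⟩
        add_mem' := by
          rintro _ _ ⟨a, n, rfl⟩ ⟨b, m, rfl⟩
          exact ⟨a + b, n + m, by rw [mul_add, add_zsmul]; abel⟩
        neg_mem' := by
          rintro _ ⟨a, n, rfl⟩
          exact ⟨-a, -n, by rw [mul_neg, neg_zsmul]; abel⟩ }
    have hLid : ∀ a : A, ∀ l ∈ L, a * l ∈ L := by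
      rintro a _ ⟨b, n, rfl⟩
      refine ⟨a * b + n • a, 0, ?_⟩
      simp [mul_add, add_mul, mul_smul_comm, smul_mul_assoc, mul_assoc]
    have hRid : ∀ a : A, ∀ r ∈ R, r * a ∈ R := by
      rintro a _ ⟨b, n, rfl⟩
      refine ⟨b * a + n • a, 0, ?_⟩
      simp [mul_add, add_mul, mul_smul_comm, smul_mul_assoc, mul_assoc]
    have hLR : ∀ l ∈ L, ∀ r ∈ R, l * r = 0 := by
      rintro _ ⟨a, n, rfl⟩ _ ⟨b, m, rfl⟩
      simp [mul_add, add_mul, mul_smul_comm, smul_mul_assoc, mul_assoc, h1, h2, hx]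
    have hmem : x ∈ R ⊓ L := ⟨⟨0, 1, by simp⟩, ⟨0, 1, by simp⟩⟩
    rw [← h L R hLid hRid hLR] at hmem
    -- the target subgroup {x*c*x}
    let S : AddSubgroup A :=
      { carrier := {z | ∃ c : A, x * c * x = z}
        zero_mem' := ⟨0, by simp⟩
        add_mem' := by
          rintro _ _ ⟨c, rfl⟩ ⟨d, rfl⟩
          exact ⟨c + d, by rw [mul_add, add_mul]⟩
        neg_mem' := by
          rintro _ ⟨c, rfl⟩
          exact ⟨-c, by rw [mul_neg, neg_mul]⟩ }
    have hsub : AddSubgroup.closure {z : A | ∃ r ∈ R, ∃ l ∈ L, r * l = z} ≤ S := by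
      rw [AddSubgroup.closure_le]
      rintro _ ⟨_, ⟨a, n, rfl⟩, _, ⟨b, m, rfl⟩, rfl⟩
      refine ⟨a * b + m • a + n • b, ?_⟩
      simp [mul_add, add_mul, mul_smul_comm, smul_mul_assoc, mul_assoc, h1, h2, hx]
      abel
    obtain ⟨y, hy⟩ := hsub hmem
    exact ⟨y, hy⟩
end

section
/- Let A be an associative algebra and L = [A,A]. A subspace I of L is a regular inner ideal of L (i.e. I·I = 0 and IAI ⊆ I) if and only if there exist a left ideal 𝓛 and a right ideal 𝓡 of A with 𝓛𝓡 = 0 and 𝓡𝓛 ⊆ I ⊆ 𝓡 ∩ 𝓛 ∩ L. -/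
/-- Let `A` be an associative algebra and `L = [A,A]`. A subspace `I ⊆ L` is a regular
inner ideal of `L` (i.e. `I·I = 0` and `IAI ⊆ I`) iff there exist a left ideal `𝓛` and a
right ideal `𝓡` of `A` with `𝓛𝓡 = 0` and `𝓡𝓛 ⊆ I ⊆ 𝓡 ⊓ 𝓛 ⊓ L`. -/
theorem regular_inner_ideal_iff {F A : Type*} [Field F] [Ring A] [Algebra F A]
    (L : Submodule F A) (hL : L = Submodule.span F {x : A | ∃ a b : A, a * b - b * a = x})
    (I : Submodule F A) (hIL : I ≤ L) :
    ((∀ i ∈ I, ∀ j ∈ I, i * j = 0) ∧ (∀ i ∈ I, ∀ j ∈ I, ∀ a : A, i * a * j ∈ I)) ↔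
      ∃ 𝓛 𝓡 : Submodule F A,
        (∀ a : A, ∀ l ∈ 𝓛, a * l ∈ 𝓛) ∧
        (∀ a : A, ∀ r ∈ 𝓡, r * a ∈ 𝓡) ∧
        (∀ l ∈ 𝓛, ∀ r ∈ 𝓡, l * r = 0) ∧
        (∀ r ∈ 𝓡, ∀ l ∈ 𝓛, r * l ∈ I) ∧
        I ≤ 𝓡 ⊓ 𝓛 ⊓ L := by
  constructor
  · rintro ⟨hsq, hinn⟩
    refine ⟨I ⊔ (⊤ : Submodule F A) * I, I ⊔ I * (⊤ : Submodule F A), ?_, ?_, ?_, ?_, ?_⟩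
    · -- left ideal
      intro a l hl
      have : I ⊔ (⊤ : Submodule F A) * I ≤
          (I ⊔ (⊤ : Submodule F A) * I).comap (LinearMap.mulLeft F a) := by
        refine sup_le ?_ ?_
        · intro i hi
          exact Submodule.mem_sup_right (Submodule.mul_mem_mul trivial hi)
        · rw [Submodule.mul_le]
          intro b _ i hi
          simp only [Submodule.mem_comap, LinearMap.mulLeft_apply]
          rw [← mul_assoc]
          exact Submodule.mem_sup_right (Submodule.mul_mem_mul trivial hi)
      exact this hl
    · -- right ideal
      intro a r hr
      have : I ⊔ I * (⊤ : Submodule F A) ≤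
          (I ⊔ I * (⊤ : Submodule F A)).comap (LinearMap.mulRight F a) := by
        refine sup_le ?_ ?_
        · intro i hi
          exact Submodule.mem_sup_right (Submodule.mul_mem_mul hi trivial)
        · rw [Submodule.mul_le]
          intro i hi b _
          simp only [Submodule.mem_comap, LinearMap.mulRight_apply]
          rw [mul_assoc]
          exact Submodule.mem_sup_right (Submodule.mul_mem_mul hi trivial)
      exact this hr
    · -- 𝓛 * 𝓡 = 0
      have key : ∀ l ∈ I ⊔ (⊤ : Submodule F A) * I, ∀ j ∈ I, l * j = 0 := by
        intro l hl j hj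
        have : I ⊔ (⊤ : Submodule F A) * I ≤ LinearMap.ker (LinearMap.mulRight F j) := by
          refine sup_le ?_ ?_
          · intro i hi
            simp only [LinearMap.mem_ker, LinearMap.mulRight_apply]
            exact hsq i hi j hj
          · rw [Submodule.mul_le]
            intro a _ i hi
            simp only [LinearMap.mem_ker, LinearMap.mulRight_apply]
            rw [mul_assoc, hsq i hi j hj, mul_zero]
        simpa using this hl
      intro l hl r hr
      have : I ⊔ I * (⊤ : Submodule F A) ≤ LinearMap.ker (LinearMap.mulLeft F l) := by
        refine sup_le ?_ ?_
        · intro j hj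
          simp only [LinearMap.mem_ker, LinearMap.mulLeft_apply]
          exact key l hl j hj
        · rw [Submodule.mul_le]
          intro j hj b _
          simp only [LinearMap.mem_ker, LinearMap.mulLeft_apply]
          rw [← mul_assoc, key l hl j hj, zero_mul]
      simpa using this hr
    · -- 𝓡 * 𝓛 ⊆ I
      have key : ∀ r ∈ I ⊔ I * (⊤ : Submodule F A), ∀ j ∈ I, r * j ∈ I := by
        intro r hr j hj
        have : I ⊔ I * (⊤ : Submodule F A) ≤ I.comap (LinearMap.mulRight F j) := by
          refine sup_le ?_ ?_
          · intro i hi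
            simp only [Submodule.mem_comap, LinearMap.mulRight_apply]
            rw [hsq i hi j hj]; exact zero_mem I
          · rw [Submodule.mul_le]
            intro i hi b _
            simp only [Submodule.mem_comap, LinearMap.mulRight_apply]
            exact hinn i hi j hj b
        exact this hr
      intro r hr l hl
      have hRideal : ∀ a : A, ∀ x ∈ I ⊔ I * (⊤ : Submodule F A),
          x * a ∈ I ⊔ I * (⊤ : Submodule F A) := by
        intro a x hx
        have : I ⊔ I * (⊤ : Submodule F A) ≤
            (I ⊔ I * (⊤ : Submodule F A)).comap (LinearMap.mulRight F a) := by
          refine sup_le ?_ ?_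
          · intro i hi
            exact Submodule.mem_sup_right (Submodule.mul_mem_mul hi trivial)
          · rw [Submodule.mul_le]
            intro i hi b _
            simp only [Submodule.mem_comap, LinearMap.mulRight_apply]
            rw [mul_assoc]
            exact Submodule.mem_sup_right (Submodule.mul_mem_mul hi trivial)
        exact this hx
      have : I ⊔ (⊤ : Submodule F A) * I ≤ I.comap (LinearMap.mulLeft F r) := by
        refine sup_le ?_ ?_
        · intro j hj
          simp only [Submodule.mem_comap, LinearMap.mulLeft_apply]
          exact key r hr j hj
        · rw [Submodule.mul_le]
          intro a _ j hj
          simp only [Submodule.mem_comap, LinearMap.mulLeft_apply]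
          rw [← mul_assoc]
          exact key (r * a) (hRideal a r hr) j hj
      exact this hl
    · -- I ≤ 𝓡 ⊓ 𝓛 ⊓ L
      intro i hi
      exact ⟨⟨Submodule.mem_sup_left hi, Submodule.mem_sup_left hi⟩, hIL hi⟩
  · rintro ⟨𝓛, 𝓡, hLid, hRid, hLR, hRL, hsub⟩
    constructor
    · intro i hi j hj
      exact hLR i (hsub hi).1.2 j (hsub hj).1.1
    · intro i hi j hj a
      have : i * a * j = i * (a * j) := mul_assoc i a j
      rw [this]
      exact hRL i (hsub hi).1.1 (a * j) (hLid a j (hsub hj).1.2)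
end

section
/- Let A be an associative algebra with involution * and K = su*(A). A subspace I of K is a *-regular inner ideal of K (i.e. I·I = 0 and u*(IAI) ⊆ I) if and only if there exists a left ideal 𝓛 of A with 𝓛𝓛* = 0 and u*(𝓛*𝓛) ⊆ I ⊆ 𝓛* ∩ 𝓛 ∩ K. -/
/-- Let `A` be an associative algebra with involution `*` and `K = su*(A)`. A subspace
`I ⊆ K` is a `*`-regular inner ideal of `K` (i.e. `I·I = 0` and `u*(IAI) ⊆ I`) iff there
is a left ideal `𝓛` of `A` with `𝓛𝓛* = 0` and `u*(𝓛*𝓛) ⊆ I ⊆ 𝓛* ⊓ 𝓛 ⊓ K`. -/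
theorem star_regular_inner_ideal_iff {F A : Type*} [Field F] [Ring A] [Algebra F A]
    [StarRing F] [TrivialStar F] [StarRing A] [StarModule F A]
    (K : Submodule F A)
    (hK : K = Submodule.span F
      {x : A | ∃ a b : A, star a = -a ∧ star b = -b ∧ a * b - b * a = x})
    (I : Submodule F A) (hIK : I ≤ K) :
    ((∀ i ∈ I, ∀ j ∈ I, i * j = 0) ∧
        (∀ i ∈ I, ∀ j ∈ I, ∀ a : A, i * a * j - star (i * a * j) ∈ I)) ↔
      ∃ 𝓛 : Submodule F A,
        (∀ a : A, ∀ l ∈ 𝓛, a * l ∈ 𝓛) ∧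
        (∀ l ∈ 𝓛, ∀ l' ∈ 𝓛, l * star l' = 0) ∧
        (∀ l ∈ 𝓛, ∀ l' ∈ 𝓛, star l * l' - star l' * l ∈ I) ∧
        (∀ i ∈ I, star i ∈ 𝓛 ∧ i ∈ 𝓛 ∧ i ∈ K) := by
  have hskew : ∀ x ∈ K, star x = -x := by
    intro x hx
    rw [hK] at hx
    induction hx using Submodule.span_induction with
    | mem x hx =>
      obtain ⟨a, b, ha, hb, hab⟩ := hx
      subst hab
      rw [star_sub, star_mul, star_mul, ha, hb]
      noncomm_ring
    | zero => simp
    | add x y _ _ hx hy => rw [star_add, hx, hy, neg_add]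
    | smul c x _ hx => rw [star_smul, hx, smul_neg, star_trivial]
  have hIskew : ∀ i ∈ I, star i = -i := fun i hi => hskew i (hIK hi)
  constructor
  · rintro ⟨hI1, hI2⟩
    set S : Set A := {x | ∃ a : A, ∃ i ∈ I, x = a * i ∨ x = i} with hS
    set L : Submodule F A := Submodule.span F S with hL
    have hIL : ∀ i ∈ I, i ∈ L := fun i hi =>
      Submodule.subset_span ⟨1, i, hi, Or.inr rfl⟩
    -- left ideal
    have hleft : ∀ a : A, ∀ l ∈ L, a * l ∈ L := by
      intro a l hl
      induction hl using Submodule.span_induction with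
      | mem x hx =>
        obtain ⟨b, i, hi, hx | hx⟩ := hx
        · subst hx
          exact Submodule.subset_span ⟨a * b, i, hi, Or.inl (mul_assoc a b i).symm⟩
        · subst hx
          exact Submodule.subset_span ⟨a, x, hi, Or.inl rfl⟩
      | zero => simp
      | add x y _ _ hx hy => rw [mul_add]; exact L.add_mem hx hy
      | smul c x _ hx => rw [mul_smul_comm]; exact L.smul_mem c hx
    -- l * j = 0 for l ∈ L, j ∈ I
    have hLI : ∀ l ∈ L, ∀ j ∈ I, l * j = 0 := by
      intro l hl
      induction hl using Submodule.span_induction with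
      | mem x hx =>
        obtain ⟨a, i, hi, hx | hx⟩ := hx <;> subst hx <;> intro j hj
        · rw [mul_assoc, hI1 i hi j hj, mul_zero]
        · exact hI1 _ hi j hj
      | zero => intro j hj; rw [zero_mul]
      | add x y _ _ hx hy => intro j hj; rw [add_mul, hx j hj, hy j hj, add_zero]
      | smul c x _ hx => intro j hj; rw [smul_mul_assoc, hx j hj, smul_zero]
    -- L * star L = 0
    have hLL : ∀ l ∈ L, ∀ l' ∈ L, l * star l' = 0 := by
      intro l hl l' hl'
      induction hl' using Submodule.span_induction with
      | mem x hx =>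
        obtain ⟨a, i, hi, hx | hx⟩ := hx <;> subst hx
        · rw [star_mul, ← mul_assoc, hIskew i hi, mul_neg, hLI l hl i hi, neg_zero,
            zero_mul]
        · rw [hIskew x hi, mul_neg, hLI l hl x hi, neg_zero]
      | zero => rw [star_zero, mul_zero]
      | add x y _ _ hx hy => rw [star_add, mul_add, hx, hy, add_zero]
      | smul c x _ hx => rw [star_smul, star_trivial, mul_smul_comm, hx, smul_zero]
    -- key: -(i*c*j) - star (-(i*c*j)) ∈ I
    have hgen : ∀ i ∈ I, ∀ j ∈ I, ∀ c : A, -(i * c * j) - star (-(i * c * j)) ∈ I := by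
      intro i hi j hj c
      have h := I.neg_mem (hI2 i hi j hj c)
      rw [neg_sub] at h
      rw [star_neg, sub_neg_eq_add, neg_add_eq_sub]
      exact h
    have hQ : ∀ l ∈ L, ∀ l' ∈ L, star l * l' - star (star l * l') ∈ I := by
      intro l hl l' hl'
      induction hl using Submodule.span_induction with
      | mem x hx =>
        induction hl' using Submodule.span_induction with
        | mem y hy =>
          obtain ⟨a, i, hi, rfl | rfl⟩ := hx
          · obtain ⟨b, j, hj, rfl | rfl⟩ := hy
            · rw [show star (a * i) * (b * j) = -(i * (star a * b) * j) by
                simp [star_mul, hIskew i hi, mul_assoc]]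
              exact hgen i hi j hj _
            · rw [show star (a * i) * y = -(i * star a * y) by
                simp [star_mul, hIskew i hi, mul_assoc]]
              exact hgen i hi y hj _
          · obtain ⟨b, j, hj, rfl | rfl⟩ := hy
            · rw [show star x * (b * j) = -(x * b * j) by
                simp [hIskew x hi, mul_assoc]]
              exact hgen x hi j hj _
            · rw [show star x * y = -(x * 1 * y) by
                simp [hIskew x hi]]
              exact hgen x hi y hj _
        | zero => simp
        | add y z hy hz hy' hz' =>
          rw [show star x * (y + z) - star (star x * (y + z)) =
            (star x * y - star (star x * y)) + (star x * z - star (star x * z)) by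
              rw [mul_add, star_add]; abel]
          exact I.add_mem hy' hz'
        | smul c y hy hy' =>
          rw [show star x * (c • y) - star (star x * (c • y)) =
            c • (star x * y - star (star x * y)) by
              rw [mul_smul_comm, star_smul, star_trivial c, smul_sub]]
          exact I.smul_mem c hy'
      | zero => simp
      | add x y hx hy hx' hy' =>
        rw [show star (x + y) * l' - star (star (x + y) * l') =
          (star x * l' - star (star x * l')) + (star y * l' - star (star y * l')) by
            rw [star_add, add_mul, star_add]; abel]
        exact I.add_mem hx' hy'
      | smul c x hx hx' =>
        rw [show star (c • x) * l' - star (star (c • x) * l') =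
          c • (star x * l' - star (star x * l')) by
            rw [star_smul, star_trivial c, smul_mul_assoc, star_smul, star_trivial c,
              smul_sub]]
        exact I.smul_mem c hx'
    refine ⟨L, hleft, hLL, ?_, ?_⟩
    · intro l hl l' hl'
      have := hQ l hl l' hl'
      rwa [star_mul, star_star] at this
    · intro i hi
      refine ⟨?_, hIL i hi, hIK hi⟩
      rw [hIskew i hi]
      exact L.neg_mem (hIL i hi)
  · rintro ⟨L, hleft, hLL, hQ, hIL⟩
    constructor
    · intro i hi j hj
      have := hLL i (hIL i hi).2.1 (star j) ?_
      · rwa [star_star] at this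
      · exact (by simpa using (hIL j hj).1)
    · intro i hi j hj a
      have hl : star a * star i ∈ L := hleft (star a) _ (hIL i hi).1
      have := hQ (star a * star i) hl j (hIL j hj).2.1
      rw [star_mul, star_star, star_star] at this
      rw [star_mul, star_mul]
      rw [mul_assoc] at this ⊢
      exact this
end

section
/- Let A be a simple associative algebra and L = [A,A]. Suppose I is a regular inner ideal of L associated to a pair (𝓛, 𝓡) of a left ideal 𝓛 and right ideal 𝓡 with 𝓛𝓡 = 0 and 𝓡𝓛 ⊆ I ⊆ 𝓡 ∩ 𝓛 ∩ L, where 𝓛 and 𝓡 are nonzero. Then A𝓛 = AI and 𝓡A = IA. -/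
/-- In a simple ring, a submodule closed under left and right multiplication
by arbitrary ring elements is either `⊥` or everything. -/
lemma aux_simple_span {F A : Type*} [Field F] [Ring A] [Algebra F A]
    (hsimple : ∀ J : TwoSidedIdeal A, J = ⊥ ∨ J = ⊤)
    (S : Submodule F A) (hne : S ≠ ⊥)
    (hl : ∀ a x : A, x ∈ S → a * x ∈ S)
    (hr : ∀ a x : A, x ∈ S → x * a ∈ S) : S = ⊤ := by
  set J : TwoSidedIdeal A := TwoSidedIdeal.mk' (S : Set A) S.zero_mem
    (fun hx hy => S.add_mem hx hy) (fun hx => S.neg_mem hx)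
    (fun {x y} hy => hl x y hy) (fun {x y} hx => hr y x hx) with hJ
  have hmem : ∀ x : A, x ∈ J ↔ x ∈ S := by
    intro x
    rw [hJ, TwoSidedIdeal.mem_mk']
    rfl
  rcases hsimple J with h | h
  · exfalso
    apply hne
    ext x
    simp only [Submodule.mem_bot]
    constructor
    · intro hx
      have hxJ : x ∈ J := (hmem x).mpr hx
      rw [h] at hxJ
      exact hxJ
    · rintro rfl; exact S.zero_mem
  · ext x
    simp only [Submodule.mem_top, iff_true]
    have hxJ : x ∈ J := by rw [h]; trivial
    exact (hmem x).mp hxJ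

/-- Let `A` be a simple associative algebra and `L = [A,A]`. If `I` is a regular inner
ideal of `L` associated to a pair `(𝓛, 𝓡)` of nonzero one-sided ideals with `𝓛𝓡 = 0`
and `𝓡𝓛 ⊆ I ⊆ 𝓡 ⊓ 𝓛 ⊓ L`, then `A𝓛 = AI` and `𝓡A = IA`. -/
theorem AL_eq_AI {F A : Type*} [Field F] [Ring A] [Algebra F A]
    (hsimple : ∀ J : TwoSidedIdeal A, J = ⊥ ∨ J = ⊤)
    (hAA : ∃ a b : A, a * b ≠ 0)
    (L : Submodule F A) (hL : L = Submodule.span F {x : A | ∃ a b : A, a * b - b * a = x})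
    (I : Submodule F A)
    (𝓛 𝓡 : Submodule F A) (h𝓛ne : 𝓛 ≠ ⊥) (h𝓡ne : 𝓡 ≠ ⊥)
    (h𝓛 : ∀ a : A, ∀ l ∈ 𝓛, a * l ∈ 𝓛)
    (h𝓡 : ∀ a : A, ∀ r ∈ 𝓡, r * a ∈ 𝓡)
    (hLR : ∀ l ∈ 𝓛, ∀ r ∈ 𝓡, l * r = 0)
    (hRL : ∀ r ∈ 𝓡, ∀ l ∈ 𝓛, r * l ∈ I)
    (hsub : I ≤ 𝓡 ⊓ 𝓛 ⊓ L) :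
    Submodule.span F {x : A | ∃ a : A, ∃ l ∈ 𝓛, a * l = x} =
        Submodule.span F {x : A | ∃ a : A, ∃ i ∈ I, a * i = x} ∧
      Submodule.span F {x : A | ∃ r ∈ 𝓡, ∃ a : A, r * a = x} =
        Submodule.span F {x : A | ∃ i ∈ I, ∃ a : A, i * a = x} := by
  have hI𝓡 : I ≤ 𝓡 := le_trans hsub (le_trans inf_le_left inf_le_left)
  have hI𝓛 : I ≤ 𝓛 := le_trans hsub (le_trans inf_le_left inf_le_right)
  -- The span of A𝓡 is a nonzero two-sided ideal, hence all of A.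
  have hAR : Submodule.span F {x : A | ∃ a : A, ∃ r ∈ 𝓡, a * r = x} = ⊤ := by
    refine aux_simple_span hsimple _ ?_ ?_ ?_
    · -- nonzero
      intro hbot
      obtain ⟨r, hrmem, hrne⟩ := Submodule.ne_bot_iff 𝓡 |>.mp h𝓡ne
      have hmem : r ∈ Submodule.span F {x : A | ∃ a : A, ∃ s ∈ 𝓡, a * s = x} :=
        Submodule.subset_span ⟨1, r, hrmem, one_mul r⟩
      rw [hbot, Submodule.mem_bot] at hmem
      exact hrne hmem
    · -- closed under left multiplication
      intro a x hx
      induction hx using Submodule.span_induction with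
      | mem y hy =>
        obtain ⟨b, r, hr, rfl⟩ := hy
        exact Submodule.subset_span ⟨a * b, r, hr, mul_assoc a b r⟩
      | zero => rw [mul_zero]; exact Submodule.zero_mem _
      | add y z _ _ hy hz => rw [mul_add]; exact Submodule.add_mem _ hy hz
      | smul c y _ hy => rw [mul_smul_comm]; exact Submodule.smul_mem _ c hy
    · -- closed under right multiplication
      intro a x hx
      induction hx using Submodule.span_induction with
      | mem y hy =>
        obtain ⟨b, r, hr, rfl⟩ := hy
        exact Submodule.subset_span ⟨b, r * a, h𝓡 a r hr, (mul_assoc b r a).symm⟩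
      | zero => rw [zero_mul]; exact Submodule.zero_mem _
      | add y z _ _ hy hz => rw [add_mul]; exact Submodule.add_mem _ hy hz
      | smul c y _ hy => rw [smul_mul_assoc]; exact Submodule.smul_mem _ c hy
  -- The span of 𝓛A is a nonzero two-sided ideal, hence all of A.
  have hLA : Submodule.span F {x : A | ∃ l ∈ 𝓛, ∃ a : A, l * a = x} = ⊤ := by
    refine aux_simple_span hsimple _ ?_ ?_ ?_
    · intro hbot
      obtain ⟨l, hlmem, hlne⟩ := Submodule.ne_bot_iff 𝓛 |>.mp h𝓛ne
      have hmem : l ∈ Submodule.span F {x : A | ∃ m ∈ 𝓛, ∃ a : A, m * a = x} :=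
        Submodule.subset_span ⟨l, hlmem, 1, mul_one l⟩
      rw [hbot, Submodule.mem_bot] at hmem
      exact hlne hmem
    · intro a x hx
      induction hx using Submodule.span_induction with
      | mem y hy =>
        obtain ⟨l, hl, b, rfl⟩ := hy
        exact Submodule.subset_span ⟨a * l, h𝓛 a l hl, b, mul_assoc a l b⟩
      | zero => rw [mul_zero]; exact Submodule.zero_mem _
      | add y z _ _ hy hz => rw [mul_add]; exact Submodule.add_mem _ hy hz
      | smul c y _ hy => rw [mul_smul_comm]; exact Submodule.smul_mem _ c hy
    · intro a x hx
      induction hx using Submodule.span_induction with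
      | mem y hy =>
        obtain ⟨l, hl, b, rfl⟩ := hy
        exact Submodule.subset_span ⟨l, hl, b * a, (mul_assoc l b a).symm⟩
      | zero => rw [zero_mul]; exact Submodule.zero_mem _
      | add y z _ _ hy hz => rw [add_mul]; exact Submodule.add_mem _ hy hz
      | smul c y _ hy => rw [smul_mul_assoc]; exact Submodule.smul_mem _ c hy
  constructor
  · -- A𝓛 = AI
    apply le_antisymm
    · rw [Submodule.span_le]
      rintro x ⟨a, l, hl, rfl⟩
      -- a ∈ span(A𝓡), so a * l ∈ span(A(𝓡𝓛)) ⊆ span(AI)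
      have ha : a ∈ Submodule.span F {x : A | ∃ b : A, ∃ r ∈ 𝓡, b * r = x} := by
        rw [hAR]; trivial
      show a * l ∈ Submodule.span F {x : A | ∃ b : A, ∃ i ∈ I, b * i = x}
      induction ha using Submodule.span_induction with
      | mem y hy =>
        obtain ⟨b, r, hr, rfl⟩ := hy
        rw [mul_assoc]
        exact Submodule.subset_span ⟨b, r * l, hRL r hr l hl, rfl⟩
      | zero => rw [zero_mul]; exact Submodule.zero_mem _
      | add y z _ _ hy hz => rw [add_mul]; exact Submodule.add_mem _ hy hz
      | smul c y _ hy => rw [smul_mul_assoc]; exact Submodule.smul_mem _ c hy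
    · apply Submodule.span_mono
      rintro x ⟨a, i, hi, rfl⟩
      exact ⟨a, i, hI𝓛 hi, rfl⟩
  · -- 𝓡A = IA
    apply le_antisymm
    · rw [Submodule.span_le]
      rintro x ⟨r, hr, a, rfl⟩
      have ha : a ∈ Submodule.span F {x : A | ∃ l ∈ 𝓛, ∃ b : A, l * b = x} := by
        rw [hLA]; trivial
      show r * a ∈ Submodule.span F {x : A | ∃ i ∈ I, ∃ b : A, i * b = x}
      induction ha using Submodule.span_induction with
      | mem y hy =>
        obtain ⟨l, hl, b, rfl⟩ := hy
        rw [← mul_assoc]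
        exact Submodule.subset_span ⟨r * l, hRL r hr l hl, b, rfl⟩
      | zero => rw [mul_zero]; exact Submodule.zero_mem _
      | add y z _ _ hy hz => rw [mul_add]; exact Submodule.add_mem _ hy hz
      | smul c y _ hy => rw [mul_smul_comm]; exact Submodule.smul_mem _ c hy
    · apply Submodule.span_mono
      rintro x ⟨i, hi, a, rfl⟩
      exact ⟨i, hI𝓡 hi, a, rfl⟩
end

section
/- Let A be an associative algebra with involution, let 𝓛 be a left ideal of A with 𝓛𝓛* = 0, and set I = u*(𝓛*𝓛) = {q - q* : q ∈ 𝓛*𝓛}. Then I·I = 0, u*(IAI) ⊆ I, and consequently I is an inner ideal of the Lie algebra K = su*(A), provided I ⊆ K. -/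
/-- Let `A` be an associative algebra with involution, `𝓛` a left ideal with `𝓛𝓛* = 0`,
and `I = u*(𝓛*𝓛) = {q - q* : q ∈ 𝓛*𝓛}`. Then `I·I = 0`, `u*(IAI) ⊆ I`, and hence `I` is
an inner ideal of the Lie algebra `K = su*(A)` provided `I ⊆ K`. -/
theorem u_star_LL_inner_ideal {F A : Type*} [Field F] [Ring A] [Algebra F A]
    [StarRing F] [TrivialStar F] [StarRing A] [StarModule F A]
    (K : Submodule F A)
    (hK : K = Submodule.span F
      {x : A | ∃ a b : A, star a = -a ∧ star b = -b ∧ a * b - b * a = x})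
    (𝓛 : Submodule F A) (h𝓛 : ∀ a : A, ∀ l ∈ 𝓛, a * l ∈ 𝓛)
    (h0 : ∀ l ∈ 𝓛, ∀ l' ∈ 𝓛, l * star l' = 0)
    (I : Set A)
    (hI : I = {x : A | ∃ q ∈ Submodule.span F
      {y : A | ∃ l ∈ 𝓛, ∃ l' ∈ 𝓛, star l * l' = y}, x = q - star q}) :
    (∀ i ∈ I, ∀ j ∈ I, i * j = 0) ∧
      (∀ i ∈ I, ∀ j ∈ I, ∀ a : A, i * a * j - star (i * a * j) ∈ I) ∧
      ((∀ x ∈ I, x ∈ K) →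
        ∀ i ∈ I, ∀ j ∈ I, ∀ x ∈ K, i * (j * x - x * j) - (j * x - x * j) * i ∈ I) := by
  set S : Set A := {y : A | ∃ l ∈ 𝓛, ∃ l' ∈ 𝓛, star l * l' = y} with hS
  set P : Submodule F A := Submodule.span F S with hP
  -- P is star-stable
  have hstarP : ∀ q ∈ P, star q ∈ P := by
    intro q hq
    induction hq using Submodule.span_induction with
    | mem y hy =>
      obtain ⟨l, hl, l', hl', rfl⟩ := hy
      refine Submodule.subset_span ⟨l', hl', l, hl, ?_⟩
      simp [star_mul]
    | zero => simp
    | add a b _ _ ha hb => rw [star_add]; exact P.add_mem ha hb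
    | smul c a _ ha => rw [star_smul, star_trivial]; exact P.smul_mem c ha
  -- generator products vanish
  have hSS : ∀ y ∈ S, ∀ z ∈ S, y * z = 0 := by
    rintro y ⟨l, hl, l', hl', rfl⟩ z ⟨m, hm, m', hm', rfl⟩
    have h1 : l' * star m = 0 := h0 l' hl' m hm
    calc star l * l' * (star m * m') = star l * ((l' * star m) * m') := by noncomm_ring
      _ = 0 := by rw [h1]; simp
  -- P · P = 0
  have hSP : ∀ y ∈ S, ∀ r ∈ P, y * r = 0 := by
    intro y hy r hr
    have hle : P ≤ LinearMap.ker (LinearMap.mulLeft F y) := by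
      rw [hP]
      refine Submodule.span_le.2 fun z hz => ?_
      simpa [LinearMap.mem_ker] using hSS y hy z hz
    simpa [LinearMap.mem_ker] using hle hr
  have hPP : ∀ p ∈ P, ∀ r ∈ P, p * r = 0 := by
    intro p hp r hr
    have hle : P ≤ LinearMap.ker (LinearMap.mulRight F r) := by
      rw [hP]
      refine Submodule.span_le.2 fun z hz => ?_
      simpa [LinearMap.mem_ker] using hSP z hz r hr
    simpa [LinearMap.mem_ker] using hle hp
  -- P · A · P ⊆ P
  have hSAP : ∀ y ∈ S, ∀ a : A, ∀ r ∈ P, y * a * r ∈ P := by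
    intro y hy a r hr
    have hle : P ≤ Submodule.comap (LinearMap.mulLeft F (y * a)) P := by
      rw [hP]
      refine Submodule.span_le.2 fun z hz => ?_
      obtain ⟨l, hl, l', hl', rfl⟩ := hy
      obtain ⟨m, hm, m', hm', rfl⟩ := hz
      show star l * l' * a * (star m * m') ∈ P
      have hmem : l' * a * star m * m' ∈ 𝓛 := h𝓛 (l' * a * star m) m' hm'
      have : star l * l' * a * (star m * m') = star l * (l' * a * star m * m') := by
        noncomm_ring
      rw [this]
      exact Submodule.subset_span ⟨l, hl, _, hmem, rfl⟩
    exact hle hr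
  have hPAP : ∀ p ∈ P, ∀ a : A, ∀ r ∈ P, p * a * r ∈ P := by
    intro p hp a r hr
    have hle : P ≤ Submodule.comap (LinearMap.mulRight F (a * r)) P := by
      rw [hP]
      refine Submodule.span_le.2 fun z hz => ?_
      show z * (a * r) ∈ P
      rw [← mul_assoc]
      exact hSAP z hz a r hr
    have := hle hp
    rw [mul_assoc]
    exact this
  -- elements of I are in P and skew
  have hIP : ∀ i ∈ I, i ∈ P := by
    intro i hi
    rw [hI] at hi
    obtain ⟨q, hq, rfl⟩ := hi
    exact P.sub_mem hq (hstarP q hq)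
  have hIskew : ∀ i ∈ I, star i = -i := by
    intro i hi
    rw [hI] at hi
    obtain ⟨q, hq, rfl⟩ := hi
    simp
  -- elements of K are skew
  have hKskew : ∀ x ∈ K, star x = -x := by
    intro x hx
    rw [hK] at hx
    induction hx using Submodule.span_induction with
    | mem y hy =>
      obtain ⟨a, b, ha, hb, rfl⟩ := hy
      simp only [star_sub, star_mul, ha, hb]
      noncomm_ring
    | zero => simp
    | add a b _ _ ha hb => rw [star_add, ha, hb, neg_add]
    | smul c a _ ha => rw [star_smul, star_trivial, ha, smul_neg]
  have part1 : ∀ i ∈ I, ∀ j ∈ I, i * j = 0 := fun i hi j hj =>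
    hPP i (hIP i hi) j (hIP j hj)
  refine ⟨part1, ?_, ?_⟩
  · intro i hi j hj a
    have h : i * a * j ∈ P := hPAP i (hIP i hi) a j (hIP j hj)
    rw [hI]
    exact ⟨i * a * j, h, rfl⟩
  · intro _ i hi j hj x hx
    have hij : i * j = 0 := part1 i hi j hj
    have hji : j * i = 0 := part1 j hj i hi
    have hi' : star i = -i := hIskew i hi
    have hj' : star j = -j := hIskew j hj
    have hx' : star x = -x := hKskew x hx
    have hw : -(i * x * j) ∈ P := P.neg_mem (hPAP i (hIP i hi) x j (hIP j hj))
    have hsw : star (-(i * x * j)) = j * x * i := by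
      simp [star_mul, hi', hj', hx', mul_assoc]
    have key : i * (j * x - x * j) - (j * x - x * j) * i
        = -(i * x * j) - star (-(i * x * j)) := by
      rw [hsw]
      have expand : i * (j * x - x * j) - (j * x - x * j) * i
          = (i * j) * x - i * x * j - j * x * i + x * (j * i) := by noncomm_ring
      rw [expand, hij, hji]
      noncomm_ring
    rw [hI, key]
    exact ⟨-(i * x * j), hw, rfl⟩
end
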